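/- arXiv:1712.00687 — 2 statements merged into one kernel-verified Lean document; each statement's English description precedes it below -/
import Mathlib

section
/- Let u, v ∈ ℝ² be linearly independent vectors, let L = {m·u + n·v : m, n ∈ ℤ} be the lattice they generate, let p ∈ ℝ², let w ∈ ℝ² be nonzero, and let ℓ = {p + t·w : t ∈ ℝ}. Then the union ⋃_{g ∈ L} (g + ℓ) of the lattice translates of ℓ is a closed subset of ℝ² if and only if there exist integers m, n, not both zero, and a real number c, such that m·u + n·v = c·w. -/
/-!
A linear functional `f` with kernel `ℝ ∙ w` is an open surjection onto `ℝ`, and the union of the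
translates is the full preimage under `x ↦ f (x - p)` of the subgroup of `ℝ` generated by
`f u` and `f v`. So the union is closed iff that subgroup is. A subgroup of `ℝ` generated by two
numbers is countable, hence closed only if it is not dense, i.e. cyclic, which forces an integer
relation; conversely an integer relation puts it inside a discrete cyclic group.
-/

open Set Module Topology

theorem exists_zsmul_add_zsmul_eq_zero_of_mem_zmultiples {G : Type*} [AddCommGroup G]
    {a b c : G} (ha : a ∈ AddSubgroup.zmultiples c) (hb : b ∈ AddSubgroup.zmultiples c) :
    ∃ m n : ℤ, ¬(m = 0 ∧ n = 0) ∧ m • a + n • b = 0 := by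
  obtain ⟨j, rfl⟩ := ha
  obtain ⟨k, rfl⟩ := hb
  by_cases hjk : j = 0 ∧ k = 0
  · exact ⟨1, 0, by simp, by simp [hjk.1]⟩
  · refine ⟨k, -j, fun h => hjk ⟨neg_eq_zero.mp h.2, h.1⟩, ?_⟩
    simp only [smul_smul, ← add_smul, neg_mul, mul_comm k j, add_neg_cancel, zero_smul]

theorem exists_closure_pair_le_zmultiples {K : Type*} [Field K] [CharZero K] {a b : K}
    {m n : ℤ} (hmn : ¬(m = 0 ∧ n = 0)) (h : m • a + n • b = 0) :
    ∃ c, AddSubgroup.closure {a, b} ≤ AddSubgroup.zmultiples c := by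
  simp only [AddSubgroup.closure_le, pair_subset_iff, SetLike.mem_coe,
    AddSubgroup.mem_zmultiples_iff, zsmul_eq_mul] at h ⊢
  by_cases hm : m = 0
  · have hn : (n : K) ≠ 0 := Int.cast_ne_zero.mpr fun hn => hmn ⟨hm, hn⟩
    have hb : b = 0 := by simpa [hm, hn] using h
    exact ⟨a, ⟨1, by simp⟩, ⟨0, by simp [hb]⟩⟩
  · have hm' : (m : K) ≠ 0 := Int.cast_ne_zero.mpr hm
    refine ⟨b / m, ⟨-n, ?_⟩, ⟨m, mul_div_cancel₀ b hm'⟩⟩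
    push_cast
    field_simp
    linear_combination -h

theorem isClosed_of_le_zmultiples {G : Type*} [AddCommGroup G] [LinearOrder G]
    [IsOrderedAddMonoid G] [TopologicalSpace G] [OrderTopology G] [IsTopologicalAddGroup G]
    {H : AddSubgroup G} {c : G} (h : H ≤ AddSubgroup.zmultiples c) : IsClosed (H : Set G) :=
  have : DiscreteTopology H :=
    .of_subset (inferInstance : DiscreteTopology (AddSubgroup.zmultiples c)) h
  AddSubgroup.isClosed_of_discrete

theorem isClosed_addSubgroupClosure_pair_iff {a b : ℝ} :
    IsClosed (AddSubgroup.closure {a, b} : Set ℝ) ↔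
      ∃ m n : ℤ, ¬(m = 0 ∧ n = 0) ∧ m • a + n • b = 0 := by
  refine ⟨fun hclosed => ?_, fun ⟨m, n, hmn, h⟩ => ?_⟩
  · have hcountable : (AddSubgroup.closure {a, b} : Set ℝ).Countable := by
      refine (countable_range fun mn : ℤ × ℤ => mn.1 • a + mn.2 • b).mono fun z hz => ?_
      obtain ⟨m, n, rfl⟩ := AddSubgroup.mem_closure_pair.mp hz
      exact ⟨(m, n), rfl⟩
    have hdense : ¬Dense (AddSubgroup.closure {a, b} : Set ℝ) := fun hdense => by
      rw [← hclosed.closure_eq, hdense.closure_eq] at hcountable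
      exact not_countable_univ hcountable
    obtain ⟨c, hc⟩ := (AddSubgroup.dense_or_cyclic _).resolve_left hdense
    rw [← AddSubgroup.zmultiples_eq_closure] at hc
    exact exists_zsmul_add_zsmul_eq_zero_of_mem_zmultiples
      (hc ▸ AddSubgroup.subset_closure (mem_insert a {b}))
      (hc ▸ AddSubgroup.subset_closure (mem_insert_of_mem a rfl))
  · obtain ⟨c, hc⟩ := exists_closure_pair_le_zmultiples hmn h
    exact isClosed_of_le_zmultiples hc

theorem exists_surjective_ker_eq_of_finrank_add_one {K E : Type*} [Field K] [AddCommGroup E]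
    [Module K E] [FiniteDimensional K E] (N : Submodule K E) (hN : finrank K N + 1 = finrank K E) :
    ∃ f : E →ₗ[K] K, Function.Surjective f ∧ LinearMap.ker f = N := by
  have hq : finrank K (E ⧸ N) = finrank K K := by
    have := N.finrank_quotient_add_finrank
    rw [finrank_self]
    omega
  let e := LinearEquiv.ofFinrankEq _ _ hq
  refine ⟨e.toLinearMap ∘ₗ N.mkQ, e.surjective.comp N.mkQ_surjective, ?_⟩
  rw [LinearEquiv.ker_comp, Submodule.ker_mkQ]

theorem exists_eq_smul_iff_of_ker_eq_span {K E F : Type*} [Field K] [AddCommGroup E] [Module K E]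
    [AddCommGroup F] [Module K F] {f : E →ₗ[K] F} {w : E} (hf : LinearMap.ker f = K ∙ w) (x : E) :
    (∃ c : K, x = c • w) ↔ f x = 0 := by
  rw [← LinearMap.mem_ker, hf, Submodule.mem_span_singleton]
  exact exists_congr fun c => eq_comm

theorem setOf_lattice_add_line_eq_preimage {K E F : Type*} [Field K] [AddCommGroup E] [Module K E]
    [AddCommGroup F] [Module K F] {f : E →ₗ[K] F} {w : E} (hf : LinearMap.ker f = K ∙ w)
    (u v p : E) :
    {x | ∃ m n : ℤ, ∃ t : K, x = ((m : K) • u + (n : K) • v) + (p + t • w)} =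
      (fun x => f (x - p)) ⁻¹' AddSubgroup.closure {f u, f v} := by
  ext x
  simp only [mem_ofPred_eq, mem_preimage, SetLike.mem_coe, AddSubgroup.mem_closure_pair]
  refine exists₂_congr fun m n => ?_
  rw [eq_comm, ← sub_eq_zero, ← map_zsmul, ← map_zsmul, ← map_add, ← map_sub,
    ← exists_eq_smul_iff_of_ker_eq_span hf, Int.cast_smul_eq_zsmul, Int.cast_smul_eq_zsmul]
  refine exists_congr fun t => ?_
  constructor <;> intro h
  · rw [h]; abel
  · rw [← h]; abel

theorem lattice_translates_of_line_closed_iff_general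
    (u v p w : EuclideanSpace ℝ (Fin 2)) (hw : w ≠ 0) :
    IsClosed {x : EuclideanSpace ℝ (Fin 2) |
        ∃ m n : ℤ, ∃ t : ℝ, x = ((m : ℝ) • u + (n : ℝ) • v) + (p + t • w)} ↔
      ∃ m n : ℤ, ¬(m = 0 ∧ n = 0) ∧ ∃ c : ℝ, (m : ℝ) • u + (n : ℝ) • v = c • w := by
  obtain ⟨f, hf_surj, hf_ker⟩ := exists_surjective_ker_eq_of_finrank_add_one (ℝ ∙ w)
    (by rw [finrank_span_singleton hw, finrank_euclideanSpace_fin])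
  have hq : IsQuotientMap fun x => f (x - p) :=
    ((f.isOpenMap_of_finiteDimensional hf_surj).isQuotientMap f.continuous_of_finiteDimensional
      hf_surj).comp (Homeomorph.subRight p).isQuotientMap
  rw [setOf_lattice_add_line_eq_preimage hf_ker, hq.isClosed_preimage,
    isClosed_addSubgroupClosure_pair_iff]
  simp only [exists_eq_smul_iff_of_ker_eq_span hf_ker, map_add, Int.cast_smul_eq_zsmul, map_zsmul]

theorem lattice_translates_of_line_closed_iff
    (u v p w : EuclideanSpace ℝ (Fin 2))
    (huv : LinearIndependent ℝ ![u, v]) (hw : w ≠ 0) :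
    IsClosed {x : EuclideanSpace ℝ (Fin 2) |
        ∃ m n : ℤ, ∃ t : ℝ, x = ((m : ℝ) • u + (n : ℝ) • v) + (p + t • w)} ↔
      ∃ m n : ℤ, ¬(m = 0 ∧ n = 0) ∧ ∃ c : ℝ, (m : ℝ) • u + (n : ℝ) • v = c • w :=
  lattice_translates_of_line_closed_iff_general u v p w hw
end

section
/- Let u, v ∈ ℝ² be linearly independent vectors, let L = {m·u + n·v : m, n ∈ ℤ}, let p ∈ ℝ², let w ∈ ℝ² be nonzero, and let ℓ = {p + t·w : t ∈ ℝ}. If there do not exist integers m, n, not both zero, and a real number c with m·u + n·v = c·w, then the union ⋃_{g ∈ L} (g + ℓ) is dense in ℝ². -/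
/-!
Let `φ` be a linear functional on `ℝ²` with kernel `ℝ ∙ w`. A point `x` lies on a lattice
translate of `ℓ` as soon as `φ (x - p) ∈ φ(L) = ℤ φ(u) + ℤ φ(v)`. The hypothesis says exactly that
`φ(u)` and `φ(v)` are `ℤ`-linearly independent, so `φ(u) / φ(v)` is irrational and `φ(L)` is dense
in `ℝ`; its preimage under the open map `x ↦ φ (x - p)` is then dense as well.
-/

open Module Submodule

theorem irrational_div_of_linearIndependent {a b : ℝ} (h : LinearIndependent ℤ ![a, b]) :
    Irrational (a / b) := by
  have hb : b ≠ 0 := h.ne_zero 1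
  refine (irrational_iff_ne_rational _).2 fun m n hn hab => hn ?_
  refine (LinearIndependent.pair_iff.1 h n (-m) ?_).1
  field_simp at hab
  simp only [zsmul_eq_mul, Int.cast_neg]
  linarith

theorem Submodule.exists_ker_eq_of_finrank_add_one {K V : Type*} [Field K] [AddCommGroup V]
    [Module K V] [FiniteDimensional K V] {p : Submodule K V}
    (hp : finrank K p + 1 = finrank K V) : ∃ f : V →ₗ[K] K, f ≠ 0 ∧ LinearMap.ker f = p := by
  obtain ⟨f, hf, hpf⟩ := p.exists_le_ker_of_lt_top (lt_top_of_finrank_lt_finrank (by omega))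
  refine ⟨f, hf, (eq_of_le_of_finrank_eq hpf ?_).symm⟩
  have hrange : finrank K (LinearMap.range f) = 1 := by
    rw [LinearMap.range_eq_top.2 (LinearMap.surjective_of_ne_zero hf), finrank_top, finrank_self]
  have := LinearMap.finrank_range_add_finrank_ker f
  omega

theorem lattice_translates_of_line_dense_general
    (u v p w : EuclideanSpace ℝ (Fin 2))
    (hw : w ≠ 0)
    (hirr : ¬ ∃ m n : ℤ, ¬(m = 0 ∧ n = 0) ∧ ∃ c : ℝ, (m : ℝ) • u + (n : ℝ) • v = c • w) :
    Dense {x : EuclideanSpace ℝ (Fin 2) |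
      ∃ m n : ℤ, ∃ t : ℝ, x = ((m : ℝ) • u + (n : ℝ) • v) + (p + t • w)} := by
  obtain ⟨φ, hφ0, hφ⟩ :=
    (ℝ ∙ w).exists_ker_eq_of_finrank_add_one (by simp [finrank_span_singleton hw])
  have hker {x} : φ x = 0 → ∃ t : ℝ, t • w = x := by
    rw [← LinearMap.mem_ker, hφ, mem_span_singleton]
    exact id
  have hφ_indep : LinearIndependent ℤ ![φ u, φ v] := by
    refine LinearIndependent.pair_iff.2 fun m n hmn => ?_
    by_contra hne
    obtain ⟨c, hc⟩ := hker (x := (m : ℝ) • u + (n : ℝ) • v) (by simpa [zsmul_eq_mul] using hmn)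
    exact hirr ⟨m, n, hne, c, hc.symm⟩
  have hopen : IsOpenMap (φ ∘ Homeomorph.subRight p) :=
    (φ.isOpenMap_of_finiteDimensional (LinearMap.surjective_of_ne_zero hφ0)).comp
      (Homeomorph.subRight p).isOpenMap
  refine ((dense_addSubgroupClosure_pair_iff.2 (irrational_div_of_linearIndependent hφ_indep)
    ).preimage hopen).mono fun x hx => ?_
  obtain ⟨m, n, hmn⟩ := AddSubgroup.mem_closure_pair.1 hx
  simp only [Function.comp_apply, Homeomorph.subRight_apply, zsmul_eq_mul] at hmn
  obtain ⟨t, ht⟩ := hker (x := x - p - ((m : ℝ) • u + (n : ℝ) • v)) (by simp [hmn])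
  exact ⟨m, n, t, by rw [ht]; abel⟩

theorem lattice_translates_of_line_dense
    (u v p w : EuclideanSpace ℝ (Fin 2))
    (huv : LinearIndependent ℝ ![u, v]) (hw : w ≠ 0)
    (hirr : ¬ ∃ m n : ℤ, ¬(m = 0 ∧ n = 0) ∧ ∃ c : ℝ, (m : ℝ) • u + (n : ℝ) • v = c • w) :
    Dense {x : EuclideanSpace ℝ (Fin 2) |
      ∃ m n : ℤ, ∃ t : ℝ, x = ((m : ℝ) • u + (n : ℝ) • v) + (p + t • w)} :=
  lattice_translates_of_line_dense_general u v p w hw hirr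
end
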